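/- arXiv:2308.05519 — 2 statements merged into one kernel-verified Lean document; each statement's English description precedes it below -/
import Mathlib

section
/- lim_{N→∞} ( N - Σ_{k=0}^{N-1} P(2k+2, 2N) ) / √N = 1/(2√π). (This gives the expected number of eigenvalues of the symplectic Ginibre ensemble lying outside the limiting support, to leading order √N/(2√π).) -/
open MeasureTheory Real Filter

/-- The lower incomplete gamma function `γ(n,x) = ∫₀^x t^(n-1) e^(-t) dt`. -/
noncomputable def lowGamma (n x : ℝ) : ℝ := ∫ t in (0:ℝ)..x, t ^ (n - 1) * Real.exp (-t)

/-- The regularized lower incomplete gamma function `P(n,x) = γ(n,x)/Γ(n)`. -/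
noncomputable def regP (n x : ℝ) : ℝ := (Real.Gamma n)⁻¹ * lowGamma n x

/-!
For integer order, `1 - P(n + 1, x) = e^{-x} ∑_{j ≤ n} x^j / j!`. Exchanging the sums, the
quantity in question is `e^{-x} ∑_{m < N} (N - m) (x^{2m}/(2m)! + x^{2m+1}/(2m+1)!)` at `x = 2N`.
There `N - m = (x - j)/2` for `j = 2m` and `(x - j)/2 + 1/2` for `j = 2m + 1`, so the sum is half
the telescoping sum `∑_{j < n} (x - j) x^j / j! = n x^n / n!` plus half the odd part of the
exponential series. The telescoped term is `N e^{-2N} (2N)^{2N} / (2N)! = √N / (2 s(2N))` with `s`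
the Stirling sequence, which tends to `√π`; the odd part is at most `e^x / 2`, so it only
contributes `O(1/√N)`.
-/

open Finset Nat

theorem hasDerivAt_exp_neg_mul_sum_range (n : ℕ) (t : ℝ) :
    HasDerivAt (fun t : ℝ ↦ -(exp (-t) * ∑ j ∈ range (n + 1), t ^ j / j !))
      (t ^ n * exp (-t) / n !) t := by
  have hexp : HasDerivAt (fun t ↦ exp (-t)) (-exp (-t)) t := by
    simpa using (hasDerivAt_neg t).exp
  have hsum : HasDerivAt (fun t : ℝ ↦ ∑ j ∈ range (n + 1), t ^ j / j !)
      (∑ j ∈ range n, t ^ j / j !) t := by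
    refine (HasDerivAt.fun_sum fun j _ ↦ (hasDerivAt_pow j t).div_const (j ! : ℝ)).congr_deriv ?_
    rw [sum_range_succ']
    refine (add_eq_left.mpr (by simp)).trans (sum_congr rfl fun j _ ↦ ?_)
    rw [factorial_succ]
    push_cast
    field_simp
  refine (hexp.mul hsum).neg.congr_deriv ?_
  rw [sum_range_succ]
  ring

theorem lowGamma_natCast_add_one (n : ℕ) (x : ℝ) :
    lowGamma (n + 1) x = n ! * (1 - exp (-x) * ∑ j ∈ range (n + 1), x ^ j / j !) := by
  have hint : lowGamma (n + 1) x = n ! * ∫ t in (0:ℝ)..x, t ^ n * exp (-t) / n ! := by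
    rw [lowGamma, ← intervalIntegral.integral_const_mul]
    refine intervalIntegral.integral_congr fun t _ ↦ ?_
    simp only [add_sub_cancel_right, rpow_natCast]
    field_simp
  rw [hint, intervalIntegral.integral_eq_sub_of_hasDerivAt
    (fun t _ ↦ hasDerivAt_exp_neg_mul_sum_range n t)
    ((by fun_prop : Continuous fun t : ℝ ↦ t ^ n * exp (-t) / n !).intervalIntegrable 0 x)]
  congr 1
  simp [sum_range_succ']
  ring

theorem regP_natCast_add_one (n : ℕ) (x : ℝ) :
    regP (n + 1) x = 1 - exp (-x) * ∑ j ∈ range (n + 1), x ^ j / j ! := by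
  rw [regP, lowGamma_natCast_add_one, Gamma_nat_eq_factorial,
    inv_mul_cancel_left₀ (mod_cast n.factorial_ne_zero)]

theorem sum_range_two_mul {M : Type*} [AddCommMonoid M] (f : ℕ → M) (n : ℕ) :
    ∑ j ∈ range (2 * n), f j = ∑ m ∈ range n, (f (2 * m) + f (2 * m + 1)) := by
  induction n with
  | zero => simp
  | succ n ih => rw [mul_add_one, sum_range_succ, sum_range_succ, sum_range_succ, ih, add_assoc]

theorem sum_range_sum_range_succ (f : ℕ → ℝ) (n : ℕ) :
    ∑ k ∈ range n, ∑ m ∈ range (k + 1), f m = ∑ m ∈ range n, (n - m) * f m := by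
  induction n with
  | zero => simp
  | succ n ih =>
    rw [sum_range_succ, ih, sum_range_succ _ n, sum_range_succ _ n]
    push_cast
    simp only [add_sub_right_comm _ (1 : ℝ), add_mul, one_mul, sum_add_distrib]
    ring

theorem sum_range_sub_mul_pow_div_factorial (x : ℝ) (n : ℕ) :
    ∑ j ∈ range n, (x - j) * x ^ j / j ! = n * x ^ n / n ! := by
  induction n with
  | zero => simp
  | succ n ih =>
    rw [sum_range_succ, ih, factorial_succ]
    push_cast
    field_simp
    ring

theorem sum_range_odd_pow_div_factorial_le_exp {x : ℝ} (hx : 0 ≤ x) (n : ℕ) :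
    ∑ m ∈ range n, x ^ (2 * m + 1) / (2 * m + 1)! ≤ exp x :=
  calc ∑ m ∈ range n, x ^ (2 * m + 1) / (2 * m + 1)!
      ≤ ∑ m ∈ range n, (x ^ (2 * m) / (2 * m)! + x ^ (2 * m + 1) / (2 * m + 1)!) :=
        sum_le_sum fun m _ ↦ le_add_of_nonneg_left (by positivity)
    _ = ∑ j ∈ range (2 * n), x ^ j / j ! := (sum_range_two_mul (fun j ↦ x ^ j / j !) n).symm
    _ ≤ exp x := sum_le_exp_of_nonneg hx _

theorem natCast_sub_sum_regP (N : ℕ) (x : ℝ) :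
    N - ∑ k ∈ range N, regP (2 * k + 2) x =
      exp (-x) * ∑ m ∈ range N,
        (N - m) * (x ^ (2 * m) / (2 * m)! + x ^ (2 * m + 1) / (2 * m + 1)!) := by
  have hP (k : ℕ) :
      regP (2 * k + 2) x = 1 - exp (-x) * ∑ j ∈ range (2 * (k + 1)), x ^ j / j ! := by
    rw [show (2 * k + 2 : ℝ) = (2 * k + 1 : ℕ) + 1 by push_cast; ring, regP_natCast_add_one]
    rfl
  simp only [hP, sum_sub_distrib, ← mul_sum, sum_range_two_mul, sum_range_sum_range_succ]
  simp

theorem sum_range_sub_mul_pair_at_two_mul (N : ℕ) :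
    ∑ m ∈ range N, ((N : ℝ) - m) *
        ((2 * N : ℝ) ^ (2 * m) / (2 * m)! + (2 * N : ℝ) ^ (2 * m + 1) / (2 * m + 1)!) =
      N * (2 * N : ℝ) ^ (2 * N) / (2 * N)! +
        (1 / 2) * ∑ m ∈ range N, (2 * N : ℝ) ^ (2 * m + 1) / (2 * m + 1)! := by
  set x : ℝ := 2 * N with hx
  have hsplit (m : ℕ) : (N - m) * (x ^ (2 * m) / (2 * m)! + x ^ (2 * m + 1) / (2 * m + 1)!) =
      (1 / 2) * ((x - (2 * m : ℕ)) * x ^ (2 * m) / (2 * m)!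
        + (x - (2 * m + 1 : ℕ)) * x ^ (2 * m + 1) / (2 * m + 1)!)
      + (1 / 2) * (x ^ (2 * m + 1) / (2 * m + 1)!) := by
    rw [hx]; push_cast; ring
  rw [sum_congr rfl fun m _ ↦ hsplit m, sum_add_distrib, ← mul_sum, ← mul_sum,
    ← sum_range_two_mul (fun j ↦ (x - j) * x ^ j / j !), sum_range_sub_mul_pow_div_factorial, hx]
  push_cast
  ring

theorem mul_exp_neg_div_sqrt_eq_inv_stirlingSeq {N : ℕ} (hN : N ≠ 0) :
    exp (-(2 * N)) * (N * (2 * N) ^ (2 * N) / (2 * N)!) / √N =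
      1 / (2 * Stirling.stirlingSeq (2 * N)) := by
  have hN' : (0 : ℝ) < N := by positivity
  have hsqrt : √(2 * (2 * N : ℕ) : ℝ) = 2 * √N := by
    rw [show (2 * (2 * N : ℕ) : ℝ) = 2 ^ 2 * N by push_cast; ring, sqrt_mul (by positivity),
      sqrt_sq zero_le_two]
  have hexp : exp (-(2 * N)) = (exp 1 ^ (2 * N))⁻¹ := by
    rw [← exp_nat_mul, ← exp_neg]; push_cast; ring_nf
  rw [Stirling.stirlingSeq, hsqrt, hexp, div_pow]
  have := mul_self_sqrt hN'.le
  push_cast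
  field_simp
  linear_combination -this

theorem tendsto_exp_neg_mul_sum_range_odd_div_sqrt :
    Tendsto (fun N : ℕ ↦ exp (-(2 * N)) *
      ((1 / 2) * ∑ m ∈ range N, (2 * N : ℝ) ^ (2 * m + 1) / (2 * m + 1)!) / √N) atTop (nhds 0) := by
  have hinv : Tendsto (fun N : ℕ ↦ (1 / 2) / √N) atTop (nhds 0) :=
    tendsto_const_nhds.div_atTop (tendsto_sqrt_atTop.comp tendsto_natCast_atTop_atTop)
  refine tendsto_of_tendsto_of_tendsto_of_le_of_le tendsto_const_nhds hinv (fun N ↦ by positivity)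
    fun N ↦ div_le_div_of_nonneg_right ?_ (sqrt_nonneg _)
  have hexp := sum_range_odd_pow_div_factorial_le_exp (by positivity : (0 : ℝ) ≤ 2 * N) N
  calc exp (-(2 * N)) * ((1 / 2) * ∑ m ∈ range N, (2 * N : ℝ) ^ (2 * m + 1) / (2 * m + 1)!)
      ≤ exp (-(2 * N)) * ((1 / 2) * exp (2 * N)) := by gcongr
    _ = 1 / 2 := by rw [mul_left_comm, ← exp_add, neg_add_cancel, exp_zero, mul_one]

theorem expected_number_outside_GinSE :
    Tendsto (fun N : ℕ => ((N : ℝ) - ∑ k ∈ Finset.range N, regP (2 * k + 2) (2 * N)) / Real.sqrt N)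
      atTop (nhds (1 / (2 * Real.sqrt π))) := by
  have hstirling : Tendsto (fun N : ℕ ↦ 1 / (2 * Stirling.stirlingSeq (2 * N))) atTop
      (nhds (1 / (2 * √π))) :=
    tendsto_const_nhds.div
      ((Stirling.tendsto_stirlingSeq_sqrt_pi.comp
        (tendsto_id.const_mul_atTop' two_pos)).const_mul 2) (by positivity)
  rw [← add_zero (1 / (2 * √π))]
  refine (hstirling.add tendsto_exp_neg_mul_sum_range_odd_div_sqrt).congr' ?_
  filter_upwards [eventually_ne_atTop 0] with N hN
  rw [natCast_sub_sum_regP, sum_range_sub_mul_pair_at_two_mul, mul_add, add_div,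
    mul_exp_neg_div_sqrt_eq_inv_stirlingSeq hN]
end

section
/- For every x ≥ 0, Σ_{k=0}^{∞} ((-x)^k / k!) · Q(k+1, x) = (e^{-x}/2) · (1 + J₀(2x)) - e^{-x} · x · ₁F₂(1/2; 1, 3/2; -x²). -/
open MeasureTheory Real Filter

/-- The regularized upper incomplete gamma function `Q(n,x) = 1 - P(n,x)`. -/
noncomputable def regQ (n x : ℝ) : ℝ := 1 - regP n x

/-- The Bessel function of the first kind of order 0:
`J₀(z) = Σ_{k=0}^∞ (-1)^k (z/2)^(2k) / (k!)²`. -/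
noncomputable def besselJ0 (z : ℝ) : ℝ :=
  ∑' k : ℕ, (-1) ^ k * (z / 2) ^ (2 * k) / (Nat.factorial k : ℝ) ^ 2

/-- The Pochhammer symbol `(x)_k = x (x+1) ⋯ (x+k-1)`. -/
noncomputable def poch (x : ℝ) (k : ℕ) : ℝ := ∏ i ∈ Finset.range k, (x + i)

/-- The generalized hypergeometric function `₁F₂(a; b, c; z)`. -/
noncomputable def hyp1F2 (a b c z : ℝ) : ℝ :=
  ∑' k : ℕ, poch a k / (poch b k * poch c k) * z ^ k / Nat.factorial k

/-! Since `Q(k+1,x) = e^{-x} ∑_{l ≤ k} x^l/l!`, the series is `e^{-x}` times the sum of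
`(-x)^k x^l / (k! l!)` over `l ≤ k`. Grouping the terms by `n = k + l` gives `x^n/n!` times the
half alternating sum `(-1)^n ∑_{l ≤ n/2} (-1)^l C(n,l)`, which collapses to a single binomial
coefficient: `-(-1)^m C(2m,m)` for `n = 2m+1` and `(-1)^m C(2m-1,m) = (-1)^m C(2m,m)/2` for
`n = 2m > 0`. The even terms thus give `(1 + J₀(2x))/2`, the extra `1/2` coming from `n = 0`, and
the odd terms give `-x ₁F₂(1/2; 1, 3/2; -x²)`. -/

open Finset Nat

theorem hasDerivAt_neg_exp_neg (t : ℝ) : HasDerivAt (fun s => -exp (-s)) (exp (-t)) t := by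
  have h := ((hasDerivAt_id t).neg.exp).neg
  simp only [mul_neg, mul_one, neg_neg] at h
  exact h

theorem integral_pow_succ_mul_exp_neg (x : ℝ) (k : ℕ) :
    ∫ t in (0:ℝ)..x, t ^ (k + 1) * exp (-t)
      = (k + 1) * (∫ t in (0:ℝ)..x, t ^ k * exp (-t)) - x ^ (k + 1) * exp (-x) := by
  have hpow : ∀ t ∈ Set.uIcc 0 x, HasDerivAt (fun s : ℝ => s ^ (k + 1)) ((k + 1) * t ^ k) t :=
    fun t _ => by simpa using hasDerivAt_pow (k + 1) t
  rw [intervalIntegral.integral_mul_deriv_eq_deriv_mul hpow (fun t _ => hasDerivAt_neg_exp_neg t)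
    ((by fun_prop : Continuous _).intervalIntegrable _ _)
    ((by fun_prop : Continuous _).intervalIntegrable _ _)]
  simp only [mul_neg, intervalIntegral.integral_neg, mul_assoc, intervalIntegral.integral_const_mul,
    zero_pow (succ_ne_zero k), neg_zero, exp_zero, mul_one, sub_zero, sub_neg_eq_add]
  ring

theorem integral_pow_mul_exp_neg (x : ℝ) (k : ℕ) :
    ∫ t in (0:ℝ)..x, t ^ k * exp (-t)
      = k ! * (1 - exp (-x) * ∑ l ∈ range (k + 1), x ^ l / l !) := by
  induction k with
  | zero =>
    simp only [pow_zero, one_mul, zero_add, range_one, sum_singleton, factorial_zero, cast_one,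
      div_one, mul_one]
    rw [intervalIntegral.integral_eq_sub_of_hasDerivAt (fun t _ => hasDerivAt_neg_exp_neg t)
      ((by fun_prop : Continuous _).intervalIntegrable _ _), neg_zero, exp_zero]
    ring
  | succ k ih =>
    rw [integral_pow_succ_mul_exp_neg, ih, sum_range_succ _ (k + 1), Nat.factorial_succ]
    push_cast
    field_simp
    ring

theorem regQ_natCast_add_one (k : ℕ) (x : ℝ) :
    regQ (k + 1) x = exp (-x) * ∑ l ∈ range (k + 1), x ^ l / l ! := by
  have hexp : ∀ t : ℝ, t ^ ((k : ℝ) + 1 - 1) = t ^ k := fun t => by simp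
  rw [regQ, regP, lowGamma]
  simp only [hexp]
  rw [integral_pow_mul_exp_neg, Real.Gamma_nat_eq_factorial]
  field_simp
  ring

theorem HasSum.sum_antidiagonal {A α : Type*} [AddCommMonoid A] [HasAntidiagonal A]
    [AddCommMonoid α] [TopologicalSpace α] [ContinuousAdd α] [RegularSpace α]
    {f : A × A → α} {a : α} (h : HasSum f a) :
    HasSum (fun n => ∑ p ∈ antidiagonal n, f p) a :=
  (HasAntidiagonal.sigmaAntidiagonalEquivProd.hasSum_iff.2 h).sigma fun n => by
    rw [← sum_coe_sort]
    exact hasSum_fintype _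

theorem hasSum_sum_antidiagonal_filter_snd_le {R : Type*} [NormedRing R] [CompleteSpace R]
    {a b : ℕ → R} (ha : Summable (‖a ·‖)) (hb : Summable (‖b ·‖)) :
    HasSum (fun n => ∑ p ∈ antidiagonal n with p.2 ≤ p.1, a p.1 * b p.2)
      (∑' k, a k * ∑ l ∈ range (k + 1), b l) := by
  set F : ℕ × ℕ → R := fun p => if p.2 ≤ p.1 then a p.1 * b p.2 else 0
  have hF : Summable F := (ha.mul_norm hb).of_norm_bounded fun p => by
    simp only [F]
    split_ifs <;> simp
  have hfiber (k : ℕ) : HasSum (fun l => F (k, l)) (a k * ∑ l ∈ range (k + 1), b l) := by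
    have h : HasSum (fun l => F (k, l)) (∑ l ∈ range (k + 1), F (k, l)) :=
      hasSum_sum_of_ne_finset_zero fun l hl => if_neg (by simpa [Nat.lt_succ_iff] using hl)
    rw [mul_sum]
    convert h using 1
    exact sum_congr rfl fun l hl => (if_pos (Nat.lt_succ_iff.1 (mem_range.1 hl))).symm
  have hsum := hF.hasSum
  rw [(hsum.prod_fiberwise hfiber).tsum_eq]
  simpa [sum_filter] using hsum.sum_antidiagonal

theorem sum_antidiagonal_filter_snd_le {M : Type*} [AddCommMonoid M] (n : ℕ) (f : ℕ → M) :
    ∑ p ∈ antidiagonal n with p.2 ≤ p.1, f p.2 = ∑ l ∈ range (n / 2 + 1), f l := by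
  refine sum_nbij' (·.2) (fun l => (n - l, l)) ?_ ?_ ?_ ?_ fun _ _ => rfl
  · intro p hp
    rw [mem_filter, HasAntidiagonal.mem_antidiagonal] at hp
    rw [mem_range]
    omega
  · intro l hl
    rw [mem_range] at hl
    rw [mem_filter, HasAntidiagonal.mem_antidiagonal]
    omega
  · intro p hp
    rw [mem_filter, HasAntidiagonal.mem_antidiagonal] at hp
    exact Prod.ext (by omega) rfl
  · intro l _
    rfl

theorem choose_two_mul_add_two_add_one (m : ℕ) :
    (2 * m + 2).choose (m + 1) = 2 * (2 * m + 1).choose (m + 1) := by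
  rw [Nat.choose_succ_succ, choose_symm_half]
  ring

theorem poch_add_one_mul (a : ℝ) (k : ℕ) : a * poch (a + 1) k = poch a k * (a + k) := by
  rw [poch, poch, ← prod_range_succ, prod_range_succ']
  simp [add_assoc, add_comm (1 : ℝ), mul_comm]

theorem poch_one (k : ℕ) : poch 1 k = k ! := by
  simp [poch, add_comm (1 : ℝ), ← prod_range_add_one_eq_factorial]

theorem poch_pos {a : ℝ} (ha : 0 < a) (k : ℕ) : 0 < poch a k :=
  prod_pos fun i _ => by positivity

theorem hyp1F2_half_one_threeHalves_term (z : ℝ) (m : ℕ) :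
    poch (1 / 2) m / (poch 1 m * poch (3 / 2) m) * z ^ m / m !
      = z ^ m / ((2 * m + 1) * m ! ^ 2) := by
  have h : poch (3 / 2) m = poch (1 / 2) m * (2 * m + 1) := by
    linear_combination (norm := ring_nf) 2 * poch_add_one_mul (1 / 2) m
  have hpos := poch_pos (by norm_num : (0:ℝ) < 1 / 2) m
  rw [poch_one, h]
  field_simp

theorem neg_pow_div_factorial_mul_pow_div_factorial (x : ℝ) (k l : ℕ) :
    (-x) ^ k / k ! * (x ^ l / l !)
      = (-1) ^ (k + l) * x ^ (k + l) / (k + l)! * ((-1) ^ l * (k + l).choose l) := by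
  have hc : ((k + l).choose l : ℝ) * k ! * l ! = (k + l)! := by
    exact_mod_cast add_choose_mul_factorial_mul_factorial k l
  have hsign : (-1 : ℝ) ^ (2 * l) = 1 := (even_two_mul l).neg_one_pow
  have hC : ((k + l).choose l : ℝ) ≠ 0 := by exact_mod_cast (choose_pos le_add_self).ne'
  have hs : (-1 : ℝ) ^ (k + l) * (-1) ^ l = (-1) ^ k := by
    rw [pow_add, mul_assoc, ← pow_add, ← two_mul, hsign, mul_one]
  calc (-x) ^ k / k ! * (x ^ l / l !) = (-1) ^ k * x ^ (k + l) / (k ! * l !) := by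
        rw [neg_pow, pow_add]; ring
    _ = _ := by
      rw [← hc, ← hs]
      field_simp

noncomputable def triangleTerm (x : ℝ) (n : ℕ) : ℝ :=
  ∑ p ∈ antidiagonal n with p.2 ≤ p.1, (-x) ^ p.1 / p.1 ! * (x ^ p.2 / p.2 !)

theorem triangleTerm_eq (x : ℝ) (n : ℕ) :
    triangleTerm x n
      = (-1) ^ n * x ^ n / n ! * ∑ l ∈ range (n / 2 + 1), (-1) ^ l * (n.choose l : ℝ) := by
  rw [triangleTerm, ← sum_antidiagonal_filter_snd_le, mul_sum]
  refine sum_congr rfl fun p hp => ?_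
  rw [mem_filter, HasAntidiagonal.mem_antidiagonal] at hp
  rw [neg_pow_div_factorial_mul_pow_div_factorial, hp.1]

theorem hasSum_triangleTerm (x : ℝ) :
    HasSum (triangleTerm x) (∑' k, (-x) ^ k / k ! * ∑ l ∈ range (k + 1), x ^ l / l !) := by
  have h (y : ℝ) : Summable fun n => ‖y ^ n / (n ! : ℝ)‖ := by
    simpa only [norm_div, norm_pow, RCLike.norm_natCast] using
      Real.summable_pow_div_factorial ‖y‖
  unfold triangleTerm
  exact hasSum_sum_antidiagonal_filter_snd_le (a := fun k => (-x) ^ k / k !)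
    (b := fun l => x ^ l / l !) (h (-x)) (h x)

theorem triangleTerm_two_mul_add_one (x : ℝ) (m : ℕ) :
    triangleTerm x (2 * m + 1) = -x * ((-x ^ 2) ^ m / ((2 * m + 1) * m ! ^ 2)) := by
  have halt : ∑ l ∈ range (m + 1), (-1) ^ l * ((2 * m + 1).choose l : ℝ)
      = (-1) ^ m * (2 * m).choose m := by
    exact_mod_cast Int.alternating_sum_range_choose_eq_choose
  have hc : ((2 * m).choose m : ℝ) * m ! * m ! = (2 * m)! := by
    exact_mod_cast two_mul m ▸ add_choose_mul_factorial_mul_factorial m m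
  have hC : ((2 * m).choose m : ℝ) ≠ 0 := by exact_mod_cast (choose_pos (by omega)).ne'
  have hsign : (-1 : ℝ) ^ (2 * m) = 1 := (even_two_mul m).neg_one_pow
  rw [triangleTerm_eq, show (2 * m + 1) / 2 = m by omega, halt, factorial_succ, neg_pow (x ^ 2)]
  push_cast
  rw [← hc]
  field_simp
  linear_combination (-x * x ^ (2 * m)) * hsign

theorem two_mul_triangleTerm_two_mul (x : ℝ) (m : ℕ) :
    2 * triangleTerm x (2 * m) = (-x ^ 2) ^ m / m ! ^ 2 + if m = 0 then 1 else 0 := by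
  rcases m with _ | m
  · norm_num [triangleTerm_eq]
  have halt : ∑ l ∈ range (m + 1 + 1), (-1) ^ l * ((2 * (m + 1)).choose l : ℝ)
      = (-1) ^ (m + 1) * (2 * m + 1).choose (m + 1) := by
    rw [show 2 * (m + 1) = 2 * m + 1 + 1 by ring]
    exact_mod_cast Int.alternating_sum_range_choose_eq_choose
  have hc : ((2 * (m + 1)).choose (m + 1) : ℝ) * (m + 1)! * (m + 1)! = (2 * (m + 1))! := by
    exact_mod_cast two_mul (m + 1) ▸ add_choose_mul_factorial_mul_factorial (m + 1) (m + 1)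
  have hcentral : ((2 * (m + 1)).choose (m + 1) : ℝ) = 2 * (2 * m + 1).choose (m + 1) := by
    exact_mod_cast choose_two_mul_add_two_add_one m
  have hC : ((2 * m + 1).choose (m + 1) : ℝ) ≠ 0 := by
    exact_mod_cast (choose_pos (by omega)).ne'
  rw [triangleTerm_eq, show 2 * (m + 1) / 2 = m + 1 by omega, halt, neg_pow (x ^ 2),
    if_neg (succ_ne_zero m), add_zero, (even_two_mul _).neg_one_pow, ← hc, hcentral, ← pow_mul]
  field_simp

theorem tsum_triangleTerm_two_mul (x : ℝ) (h : Summable fun m => triangleTerm x (2 * m)) :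
    ∑' m, triangleTerm x (2 * m) = (1 + besselJ0 (2 * x)) / 2 := by
  have hterm (m : ℕ) :
      triangleTerm x (2 * m) = ((-x ^ 2) ^ m / m ! ^ 2 + if m = 0 then 1 else 0) / 2 := by
    rw [← two_mul_triangleTerm_two_mul]; ring
  have hbessel (m : ℕ) :
      (-1) ^ m * (2 * x / 2) ^ (2 * m) / (m ! : ℝ) ^ 2 = (-x ^ 2) ^ m / m ! ^ 2 := by
    rw [mul_div_cancel_left₀ x two_ne_zero, pow_mul, neg_pow (x ^ 2)]
  have hdelta : Summable fun m : ℕ => if m = 0 then (1 : ℝ) else 0 :=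
    (hasSum_ite_eq 0 1).summable
  have hJ : Summable fun m : ℕ => (-x ^ 2) ^ m / (m ! : ℝ) ^ 2 :=
    ((h.mul_left 2).sub hdelta).congr fun m => by rw [two_mul_triangleTerm_two_mul]; ring
  rw [tsum_congr hterm, tsum_div_const, hJ.tsum_add hdelta, tsum_ite_eq, besselJ0,
    tsum_congr hbessel, add_comm]

theorem tsum_triangleTerm_two_mul_add_one (x : ℝ) :
    ∑' m, triangleTerm x (2 * m + 1) = -x * hyp1F2 (1 / 2) 1 (3 / 2) (-x ^ 2) := by
  rw [hyp1F2, ← tsum_mul_left]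
  exact tsum_congr fun m => by
    rw [triangleTerm_two_mul_add_one, hyp1F2_half_one_threeHalves_term]

theorem alternating_generating_function_regQ_general (x : ℝ) :
    ∑' k : ℕ, (-x) ^ k / Nat.factorial k * regQ (k + 1) x
      = (Real.exp (-x) / 2) * (1 + besselJ0 (2 * x))
        - Real.exp (-x) * x * hyp1F2 (1 / 2) 1 (3 / 2) (-x ^ 2) := by
  have hT := hasSum_triangleTerm x
  have heven : Summable fun m => triangleTerm x (2 * m) :=
    hT.summable.comp_injective fun _ _ h => by omega
  have hodd : Summable fun m => triangleTerm x (2 * m + 1) :=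
    hT.summable.comp_injective fun _ _ h => by omega
  calc ∑' k : ℕ, (-x) ^ k / k ! * regQ (k + 1) x
      = exp (-x) * ∑' k, (-x) ^ k / k ! * ∑ l ∈ range (k + 1), x ^ l / l ! := by
        rw [← tsum_mul_left]
        exact tsum_congr fun k => by rw [regQ_natCast_add_one]; ring
    _ = exp (-x) * (∑' m, triangleTerm x (2 * m) + ∑' m, triangleTerm x (2 * m + 1)) := by
        rw [← hT.tsum_eq, tsum_even_add_odd heven hodd]
    _ = _ := by
        rw [tsum_triangleTerm_two_mul x heven, tsum_triangleTerm_two_mul_add_one]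
        ring

theorem alternating_generating_function_regQ (x : ℝ) (hx : 0 ≤ x) :
    ∑' k : ℕ, (-x) ^ k / Nat.factorial k * regQ (k + 1) x
      = (Real.exp (-x) / 2) * (1 + besselJ0 (2 * x))
        - Real.exp (-x) * x * hyp1F2 (1 / 2) 1 (3 / 2) (-x ^ 2) :=
  alternating_generating_function_regQ_general x
end
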